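/- arXiv:1312.3904 — 5 statements merged into one kernel-verified Lean document; each statement's English description precedes it below -/
import Mathlib

section
/- Let M ≥ 1 be an integer, let N_0, N_1, …, N_M be nonnegative real numbers, and let c, n ≥ 0 be real numbers such that Σ_{j=0}^{k} N_j ≤ c·n·k² for every integer k with 1 ≤ k ≤ M. Then Σ_{k=0}^{M} 6·N_k/((k+1)(k+2)(k+3)) ≤ 36·c·n. -/
/-!
Summation by parts turns `∑ w_k N_k` into `w_M S_M + ∑_{k<M} (w_k - w_{k+1}) S_k` with partial sums
`S_k`, and the weights `w_k = 6 / ((k+1)(k+2)(k+3))` are decreasing, so the partial sums may be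
replaced by upper bounds. Bounding `S_k` by `c n (k+1)(k+2)` (which also covers `k = 0`) makes every
term `(w_k - w_{k+1}) (k+1)(k+2) = 18 / ((k+3)(k+4))` telescope, and the whole sum is at most
`c n (6 - 12 / (M+3))`.
-/

open Finset

lemma sum_mul_le_of_sum_range_le {w N b : ℕ → ℝ} {M : ℕ}
    (hw : ∀ k < M, w (k + 1) ≤ w k) (hwM : 0 ≤ w M)
    (hS : ∀ k ≤ M, ∑ j ∈ range (k + 1), N j ≤ b k) :
    ∑ k ∈ range (M + 1), w k * N k ≤ w M * b M + ∑ k ∈ range M, (w k - w (k + 1)) * b k := by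
  have hparts := sum_range_by_parts w N (M + 1)
  simp only [Nat.add_sub_cancel, smul_eq_mul] at hparts
  rw [hparts, sub_eq_add_neg, ← sum_neg_distrib]
  gcongr with k hk
  · exact hS M le_rfl
  · rw [← neg_mul, neg_sub]
    have hkM := mem_range.mp hk
    exact mul_le_mul_of_nonneg_left (hS k hkM.le) (sub_nonneg.mpr (hw k hkM))

noncomputable def cubicWeight (k : ℕ) : ℝ := 6 / (((k : ℝ) + 1) * ((k : ℝ) + 2) * ((k : ℝ) + 3))

lemma cubicWeight_succ_le (k : ℕ) : cubicWeight (k + 1) ≤ cubicWeight k := by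
  unfold cubicWeight
  push_cast
  gcongr <;> linarith

lemma cubicWeight_nonneg (k : ℕ) : 0 ≤ cubicWeight k := by
  unfold cubicWeight
  positivity

lemma cubicWeight_abel_sum_eq (M : ℕ) :
    cubicWeight M * (((M : ℝ) + 1) * ((M : ℝ) + 2)) +
      ∑ k ∈ range M, (cubicWeight k - cubicWeight (k + 1)) * (((k : ℝ) + 1) * ((k : ℝ) + 2)) =
      6 - 12 / ((M : ℝ) + 3) := by
  induction M with
  | zero => norm_num [cubicWeight]
  | succ M ih =>
    rw [sum_range_succ, ← sub_eq_of_eq_add' ih.symm]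
    unfold cubicWeight
    push_cast
    field_simp
    ring

section PartialSums

variable {N : ℕ → ℝ} {M : ℕ} {B : ℝ}

lemma nonneg_of_sum_range_le_sq (hM : 1 ≤ M) (hN : ∀ k, k ≤ M → 0 ≤ N k)
    (hsum : ∀ k : ℕ, 1 ≤ k → k ≤ M → ∑ j ∈ range (k + 1), N j ≤ B * (k : ℝ) ^ 2) :
    0 ≤ B := by
  have hS₁ : ∑ j ∈ range 2, N j ≤ B := by simpa using hsum 1 le_rfl hM
  have hN₀₁ : 0 ≤ ∑ j ∈ range 2, N j := by
    simpa [sum_range_succ] using add_nonneg (hN 0 (by omega)) (hN 1 hM)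
  linarith

lemma sum_range_le_of_sum_range_le_sq (hM : 1 ≤ M) (hN : ∀ k, k ≤ M → 0 ≤ N k)
    (hsum : ∀ k : ℕ, 1 ≤ k → k ≤ M → ∑ j ∈ range (k + 1), N j ≤ B * (k : ℝ) ^ 2) :
    ∀ k ≤ M, ∑ j ∈ range (k + 1), N j ≤ B * (((k : ℝ) + 1) * ((k : ℝ) + 2)) := by
  have hB := nonneg_of_sum_range_le_sq hM hN hsum
  intro k hk
  rcases Nat.eq_zero_or_pos k with rfl | hk₀
  · calc ∑ j ∈ range 1, N j ≤ ∑ j ∈ range 2, N j := by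
          simpa [sum_range_succ] using hN 1 hM
      _ ≤ B := by simpa using hsum 1 le_rfl hM
      _ ≤ B * (((0 : ℕ) + 1) * ((0 : ℕ) + 2) : ℝ) := by push_cast; linarith
  · calc ∑ j ∈ range (k + 1), N j ≤ B * (k : ℝ) ^ 2 := hsum k hk₀ hk
      _ ≤ B * (((k : ℝ) + 1) * ((k : ℝ) + 2)) := by gcongr; nlinarith

end PartialSums

theorem weighted_sum_pure_bound_general
    (M : ℕ) (hM : 1 ≤ M) (N : ℕ → ℝ) (hN : ∀ k, k ≤ M → 0 ≤ N k)
    (c n : ℝ)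
    (hsum : ∀ k : ℕ, 1 ≤ k → k ≤ M →
      ∑ j ∈ Finset.range (k + 1), N j ≤ c * n * (k : ℝ) ^ 2) :
    ∑ k ∈ Finset.range (M + 1),
        6 * N k / (((k : ℝ) + 1) * ((k : ℝ) + 2) * ((k : ℝ) + 3)) ≤ 36 * c * n := by
  have hB := nonneg_of_sum_range_le_sq hM hN hsum
  have hbound := sum_mul_le_of_sum_range_le (w := cubicWeight) (fun k _ => cubicWeight_succ_le k)
    (cubicWeight_nonneg M) (sum_range_le_of_sum_range_le_sq hM hN hsum)
  calc ∑ k ∈ range (M + 1), 6 * N k / (((k : ℝ) + 1) * ((k : ℝ) + 2) * ((k : ℝ) + 3))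
      = ∑ k ∈ range (M + 1), cubicWeight k * N k := by
        refine sum_congr rfl fun k _ => ?_
        rw [cubicWeight, div_mul_eq_mul_div, mul_comm]
    _ ≤ c * n * (6 - 12 / ((M : ℝ) + 3)) := by
        rw [← cubicWeight_abel_sum_eq, mul_add, mul_sum]
        convert hbound using 2 <;> ring_nf
    _ ≤ 36 * c * n := by
        have : 0 ≤ 12 / ((M : ℝ) + 3) := by positivity
        nlinarith

/-- If partial sums satisfy `∑_{j=0}^k N_j ≤ c n k²` for `1 ≤ k ≤ M`,
then `∑_{k=0}^M 6 N_k /((k+1)(k+2)(k+3)) ≤ 36 c n`. -/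
theorem weighted_sum_pure_bound
    (M : ℕ) (hM : 1 ≤ M) (N : ℕ → ℝ) (hN : ∀ k, k ≤ M → 0 ≤ N k)
    (c n : ℝ) (hc : 0 ≤ c) (hn : 0 ≤ n)
    (hsum : ∀ k : ℕ, 1 ≤ k → k ≤ M →
      ∑ j ∈ Finset.range (k + 1), N j ≤ c * n * (k : ℝ) ^ 2) :
    ∑ k ∈ Finset.range (M + 1),
        6 * N k / (((k : ℝ) + 1) * ((k : ℝ) + 2) * ((k : ℝ) + 3)) ≤ 36 * c * n :=
  weighted_sum_pure_bound_general M hM N hN c n hsum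
end

section
/- Let M ≥ 1 be an integer, let N_0, N_1, …, N_M be nonnegative real numbers, and let c, n ≥ 0 be real numbers such that Σ_{j=0}^{k} N_j ≤ c·n·k for every integer k with 1 ≤ k ≤ M. Then Σ_{k=0}^{M} 2·N_k/((k+1)(k+2)) ≤ 12·c·n. -/
/-!
Write `w k = 2 / ((k + 1) (k + 2))`; these weights decrease and telescope, `∑_{k ≤ M} w k ≤ 2`.
For decreasing nonnegative weights, Abel summation shows that a bound on partial sums passes to the
weighted sums. Every partial sum `∑_{j ≤ k} N j` is at most `c n (k + 1)`, the partial sum of the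
constant sequence `c n` (for `k = 0` through `N 0 ≤ N 0 + N 1 ≤ c n`), hence the weighted sum is at
most `c n ∑_{k ≤ M} w k ≤ 2 c n`.
-/

open Finset

section Abel

variable {R : Type*} [Ring R] [PartialOrder R] [IsOrderedRing R]

theorem sum_mul_nonneg_of_antitone_of_partialSums_nonneg {w d : ℕ → R} {M : ℕ}
    (hw : ∀ k < M, w (k + 1) ≤ w k) (hwM : 0 ≤ w M)
    (hd : ∀ k ≤ M, 0 ≤ ∑ j ∈ range (k + 1), d j) :
    0 ≤ ∑ k ∈ range (M + 1), w k * d k := by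
  have hparts := sum_range_by_parts w d (M + 1)
  simp only [smul_eq_mul, Nat.add_sub_cancel] at hparts
  rw [hparts, sub_eq_add_neg, ← sum_neg_distrib]
  refine add_nonneg (mul_nonneg hwM (hd M le_rfl)) (sum_nonneg fun k hk => ?_)
  have hkM := mem_range.mp hk
  rw [← neg_mul, neg_sub]
  exact mul_nonneg (sub_nonneg.mpr (hw k hkM)) (hd k hkM.le)

theorem sum_mul_le_sum_mul_of_antitone_of_partialSums_le {w f g : ℕ → R} {M : ℕ}
    (hw : ∀ k < M, w (k + 1) ≤ w k) (hwM : 0 ≤ w M)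
    (hfg : ∀ k ≤ M, ∑ j ∈ range (k + 1), f j ≤ ∑ j ∈ range (k + 1), g j) :
    ∑ k ∈ range (M + 1), w k * f k ≤ ∑ k ∈ range (M + 1), w k * g k := by
  have key := sum_mul_nonneg_of_antitone_of_partialSums_nonneg (d := g - f) hw hwM fun k hk => by
    simpa only [Pi.sub_apply, sum_sub_distrib, sub_nonneg] using hfg k hk
  simpa only [Pi.sub_apply, mul_sub, sum_sub_distrib, sub_nonneg] using key

end Abel

theorem antitone_two_div_add_one_div_add_two :
    Antitone fun k : ℕ => 2 / ((k : ℝ) + 1) / ((k : ℝ) + 2) := by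
  intro k l hkl
  have hkl' : (k : ℝ) ≤ l := Nat.cast_le.mpr hkl
  dsimp only
  gcongr

theorem sum_range_two_div_add_one_div_add_two (m : ℕ) :
    ∑ k ∈ range m, 2 / ((k : ℝ) + 1) / ((k : ℝ) + 2) = 2 - 2 / ((m : ℝ) + 1) := by
  induction m with
  | zero => norm_num
  | succ m ih =>
    rw [sum_range_succ, ih]
    push_cast
    field_simp
    ring

theorem weighted_sum_mixed_bound_general
    (M : ℕ) (hM : 1 ≤ M) (N : ℕ → ℝ) (hN : ∀ k, k ≤ M → 0 ≤ N k)
    (c n : ℝ)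
    (hsum : ∀ k : ℕ, 1 ≤ k → k ≤ M →
      ∑ j ∈ Finset.range (k + 1), N j ≤ c * n * (k : ℝ)) :
    ∑ k ∈ Finset.range (M + 1),
        2 * N k / (((k : ℝ) + 1) * ((k : ℝ) + 2)) ≤ 12 * c * n := by
  have hN01 : N 0 ≤ c * n := by
    have h1 := hsum 1 le_rfl hM
    simp only [sum_range_succ, sum_range_zero, zero_add, Nat.cast_one, mul_one] at h1
    linarith [hN 1 hM]
  have hcn : 0 ≤ c * n := (hN 0 (Nat.zero_le M)).trans hN01
  have hpartial : ∀ k ≤ M, ∑ j ∈ range (k + 1), N j ≤ ∑ j ∈ range (k + 1), c * n := by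
    rintro (_ | k) hk
    · simpa using hN01
    · rw [sum_const, card_range, nsmul_eq_mul]
      refine (hsum (k + 1) k.succ_pos hk).trans ?_
      push_cast
      nlinarith
  calc ∑ k ∈ range (M + 1), 2 * N k / (((k : ℝ) + 1) * ((k : ℝ) + 2))
      = ∑ k ∈ range (M + 1), 2 / ((k : ℝ) + 1) / ((k : ℝ) + 2) * N k := by
        refine sum_congr rfl fun k _ => ?_
        field_simp
    _ ≤ ∑ k ∈ range (M + 1), 2 / ((k : ℝ) + 1) / ((k : ℝ) + 2) * (c * n) :=
        sum_mul_le_sum_mul_of_antitone_of_partialSums_le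
          (fun k _ => antitone_two_div_add_one_div_add_two k.le_succ) (by positivity) hpartial
    _ = (2 - 2 / ((M + 1 : ℕ) + 1 : ℝ)) * (c * n) := by
        rw [← sum_mul, sum_range_two_div_add_one_div_add_two]
    _ ≤ 12 * c * n := by
        have : 0 ≤ 2 / ((M + 1 : ℕ) + 1 : ℝ) := by positivity
        nlinarith

/-- If partial sums satisfy `∑_{j=0}^k N_j ≤ c n k` for `1 ≤ k ≤ M`,
then `∑_{k=0}^M 2 N_k /((k+1)(k+2)) ≤ 12 c n`. -/
theorem weighted_sum_mixed_bound
    (M : ℕ) (hM : 1 ≤ M) (N : ℕ → ℝ) (hN : ∀ k, k ≤ M → 0 ≤ N k)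
    (c n : ℝ) (hc : 0 ≤ c) (hn : 0 ≤ n)
    (hsum : ∀ k : ℕ, 1 ≤ k → k ≤ M →
      ∑ j ∈ Finset.range (k + 1), N j ≤ c * n * (k : ℝ)) :
    ∑ k ∈ Finset.range (M + 1),
        2 * N k / (((k : ℝ) + 1) * ((k : ℝ) + 2)) ≤ 12 * c * n :=
  weighted_sum_mixed_bound_general M hM N hN c n hsum
end

section
/- Let c, q ∈ ℝ², let x be a point of the segment [c,q] with x ≠ q, and let Q be a cluster with c ∉ Q such that Q is contained in the closed ball of center x and radius dist(x,c). Then d_f(q,Q) < dist(q,c). -/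
open scoped NNReal

/-- A point of the Euclidean plane. -/
abbrev Pt := EuclideanSpace ℝ (Fin 2)

/-- The farthest distance from a point `t` to a (nonempty) cluster `P`:
`d_f(t,P) = max_{p ∈ P} dist t p`. -/
noncomputable def hdist (t : Pt) (P : Finset Pt) : ℝ :=
  ((P.sup fun p => nndist t p : ℝ≥0) : ℝ)

/-- If `x` lies on the segment `[c,q]` with `x ≠ q`, and the cluster `Q`
(not containing `c`) is contained in the closed ball of center `x` and radius
`dist x c`, then `d_f(q,Q) < dist q c`. -/
theorem farthest_distance_lt_of_in_ball (c q x : Pt)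
    (hx : x ∈ segment ℝ c q) (hxq : x ≠ q)
    (Q : Finset Pt) (hQ : Q.Nonempty) (hcQ : c ∉ Q)
    (hball : (Q : Set Pt) ⊆ Metric.closedBall x (dist x c)) :
    hdist q Q < dist q c := by
  have hwcxq : Wbtw ℝ c x q := mem_segment_iff_wbtw.mp hx
  have hqc : q ≠ c := by
    rintro rfl
    exact hxq (by simpa using hx)
  have hsum : dist q x + dist x c = dist q c := by
    have := hwcxq.dist_add_dist
    rw [dist_comm q x, dist_comm x c, dist_comm q c]
    linarith
  have key : ∀ p ∈ Q, dist q p < dist q c := by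
    intro p hp
    have hpx : dist x p ≤ dist x c := by
      have := hball hp
      rw [Metric.mem_closedBall, dist_comm] at this
      exact this
    have htri : dist q p ≤ dist q x + dist x p := dist_triangle q x p
    have hle : dist q p ≤ dist q c := by linarith
    rcases lt_or_eq_of_le hle with h | h
    · exact h
    · exfalso
      -- equality forces dist x p = dist x c and Wbtw ℝ q x p
      have h1 : dist q x + dist x p = dist q p := by linarith
      have h2 : dist x p = dist x c := by linarith
      have hw : Wbtw ℝ q x p := dist_add_dist_eq_iff.mp h1
      have hw' : Wbtw ℝ q x c := hwcxq.symm
      have hs1 : SameRay ℝ (x - q) (p - x) := by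
        simpa using hw.sameRay_vsub
      have hs2 : SameRay ℝ (x - q) (c - x) := by
        simpa using hw'.sameRay_vsub
      have hxq' : x - q ≠ 0 := sub_ne_zero.mpr hxq
      have hs : SameRay ℝ (p - x) (c - x) :=
        hs1.symm.trans hs2 (fun h0 => absurd h0 hxq')
      have hn : ‖p - x‖ = ‖c - x‖ := by
        have e1 : ‖p - x‖ = dist x p := by rw [dist_comm, dist_eq_norm]
        have e2 : ‖c - x‖ = dist x c := by rw [dist_comm, dist_eq_norm]
        rw [e1, e2, h2]
      have : p - x = c - x := hs.eq_of_norm_eq hn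
      have : p = c := by
        have := sub_left_injective this
        exact this
      exact hcQ (this ▸ hp)
  -- conclude for the sup
  unfold hdist
  have h0 : (0 : ℝ) < dist q c := dist_pos.mpr hqc
  have hs : (Q.sup fun p => nndist q p) < nndist q c := by
    rw [Finset.sup_lt_iff (by exact_mod_cast h0 : (⊥ : ℝ≥0) < nndist q c)]
    intro p hp
    exact_mod_cast key p hp
  exact_mod_cast hs
end

section
/- Let P and Q be disjoint clusters (P ∩ Q = ∅). Then the bisector of P and Q with respect to the farthest distance, namely the set {t ∈ ℝ² : d_f(t,P) = d_f(t,Q)}, has empty interior in ℝ². -/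
open scoped NNReal

/-!
If `d_f(t,P) = d_f(t,Q)`, pick farthest points `p ∈ P` and `q ∈ Q` from `t`; then
`dist t p = dist t q`, so `t` lies on the perpendicular bisector of `p ≠ q`. Hence the bisector
is covered by finitely many lines, which is a Lebesgue-null set and so has empty interior.
-/

open MeasureTheory AffineSubspace

lemma exists_mem_hdist_eq_dist (t : Pt) {P : Finset Pt} (hP : P.Nonempty) :
    ∃ p ∈ P, hdist t P = dist t p := by
  obtain ⟨p, hp, hsup⟩ := P.exists_mem_eq_sup hP fun p => nndist t p
  exact ⟨p, hp, by rw [hdist, hsup, coe_nndist]⟩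

lemma setOf_hdist_eq_subset_iUnion_perpBisector {P Q : Finset Pt}
    (hP : P.Nonempty) (hQ : Q.Nonempty) :
    {t : Pt | hdist t P = hdist t Q} ⊆ ⋃ pq ∈ P ×ˢ Q, (perpBisector pq.1 pq.2 : Set Pt) := by
  intro t ht
  obtain ⟨p, hp, hpt⟩ := exists_mem_hdist_eq_dist t hP
  obtain ⟨q, hq, hqt⟩ := exists_mem_hdist_eq_dist t hQ
  refine Set.mem_biUnion (x := (p, q)) (Finset.mem_product.2 ⟨hp, hq⟩) ?_
  rw [SetLike.mem_coe, mem_perpBisector_iff_dist_eq, ← hpt, ← hqt]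
  exact ht

/-- For disjoint clusters `P` and `Q`, the bisector
`{t : d_f(t,P) = d_f(t,Q)}` with respect to the farthest distance has empty
interior in the plane. -/
theorem bisector_empty_interior (P Q : Finset Pt)
    (hP : P.Nonempty) (hQ : Q.Nonempty)
    (hdisj : (P : Set Pt) ∩ (Q : Set Pt) = ∅) :
    interior {t : Pt | hdist t P = hdist t Q} = ∅ := by
  refine (volume : Measure Pt).interior_eq_empty_of_null <|
    measure_mono_null (setOf_hdist_eq_subset_iUnion_perpBisector hP hQ) ?_
  refine (measure_biUnion_null_iff (P ×ˢ Q).countable_toSet).2 fun pq hpq => ?_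
  obtain ⟨hp, hq⟩ := Finset.mem_product.1 hpq
  have hne : pq.1 ≠ pq.2 := fun h =>
    (Set.eq_empty_iff_forall_notMem.1 hdisj) pq.1 ⟨hp, h ▸ hq⟩
  exact Measure.addHaar_affineSubspace _ _ (by rwa [Ne, perpBisector_eq_top])
end

section
/- (Clarkson–Shor bound.) Let F be a finite family of clusters with sizes w(C) ∈ ℕ and total size n = Σ_{C∈F} w(C), let a ≥ 1 be an integer, and let I be a finite set of configurations, where each configuration i ∈ I is assigned a defining set A_i ⊆ F with |A_i| = a and a conflicting set B_i ⊆ F disjoint from A_i, with distinct configurations having distinct pairs (A_i,B_i). For a subfamily G ⊆ F, let N_0(G) denote the number of configurations i with A_i ⊆ G and B_i ∩ G = ∅. Suppose there is a real α ≥ 0 such that N_0(G) ≤ α·Σ_{C∈G} w(C) for every subfamily G ⊆ F. Then for every integer k ≥ 1, the number of configurations i with |B_i| ≤ k is at most e·(k+1)^{a−1}·α·n. -/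
/-!
Pick a random subfamily `G ⊆ F` containing each cluster independently with probability
`p = 1/(k+1)`. Configuration `i` is counted by `N₀(G)` with probability `p^a (1-p)^|B_i|`,
which is at least `p^a/e` when `|B_i| ≤ k`, because `(1 - 1/(k+1))^k ≥ 1/e`. Hence
`#{i : |B_i| ≤ k} · p^a/e ≤ 𝔼 N₀(G) ≤ α 𝔼 w(G) = α p n`.
-/

open Finset

section
variable {ι : Type*} [DecidableEq ι]

theorem sum_Icc_pow_card_mul_pow_card_sdiff {R : Type*} [CommSemiring R] (p q : R)
    {A D F : Finset ι} (hAD : A ⊆ D) (hDF : D ⊆ F) :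
    ∑ G ∈ Icc A D, p ^ #G * q ^ #(F \ G) = p ^ #A * q ^ #(F \ D) * (p + q) ^ #(D \ A) := by
  have hdisj {u} (hu : u ∈ (D \ A).powerset) : Disjoint A u :=
    disjoint_of_subset_right (mem_powerset.mp hu) disjoint_sdiff
  have hinj : Set.InjOn (A ∪ ·) (D \ A).powerset := fun u hu v hv huv => by
    rw [← union_sdiff_cancel_left (hdisj hu), ← union_sdiff_cancel_left (hdisj hv)]
    exact congrArg (· \ A) huv
  rw [Icc_eq_image_powerset hAD, sum_image hinj, ← sum_pow_mul_eq_add_pow, mul_sum]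
  refine sum_congr rfl fun u hu => ?_
  have huDA := mem_powerset.mp hu
  have hAuF : A ∪ u ⊆ F := union_subset (hAD.trans hDF) ((huDA.trans sdiff_subset).trans hDF)
  have hcard : #(F \ (A ∪ u)) = #(F \ D) + (#(D \ A) - #u) := by
    rw [card_sdiff_of_subset hAuF, card_sdiff_of_subset hDF, card_sdiff_of_subset hAD,
      card_union_of_disjoint (hdisj hu)]
    have huA := card_le_card huDA
    rw [card_sdiff_of_subset hAD] at huA
    have hAD' := card_le_card hAD
    have hDF' := card_le_card hDF
    omega
  rw [card_union_of_disjoint (hdisj hu), hcard, pow_add, pow_add]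
  ring

theorem sum_mul_sum_filter_comm {α β R : Type*} [CommSemiring R] (s : Finset α) (t : Finset β)
    (P : β → α → Prop) [∀ y x, Decidable (P y x)] (μ : α → R) (f : β → R) :
    ∑ x ∈ s, μ x * ∑ y ∈ t with P y x, f y =
      ∑ y ∈ t, f y * ∑ x ∈ s with P y x, μ x := by
  simp only [mul_sum, sum_filter, mul_ite, mul_zero]
  rw [sum_comm]
  simp only [mul_comm]

/-- The probability that a random subfamily of `F`, containing each member independently with
probability `p`, is `G`. -/
noncomputable def sampleProb (F : Finset ι) (p : ℝ) (G : Finset ι) : ℝ :=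
  p ^ #G * (1 - p) ^ #(F \ G)

theorem sampleProb_nonneg (F : Finset ι) {p : ℝ} (hp0 : 0 ≤ p) (hp1 : p ≤ 1)
    (G : Finset ι) : 0 ≤ sampleProb F p G := by
  unfold sampleProb
  have := sub_nonneg.mpr hp1
  positivity

theorem sum_sampleProb_Icc (p : ℝ) {A D F : Finset ι} (hAD : A ⊆ D) (hDF : D ⊆ F) :
    ∑ G ∈ Icc A D, sampleProb F p G = p ^ #A * (1 - p) ^ #(F \ D) := by
  simp only [sampleProb]
  rw [sum_Icc_pow_card_mul_pow_card_sdiff p (1 - p) hAD hDF, add_sub_cancel, one_pow, mul_one]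

theorem sum_sampleProb_mul_sum (F : Finset ι) (p : ℝ) (w : ι → ℝ) :
    ∑ G ∈ F.powerset, sampleProb F p G * ∑ C ∈ G, w C = p * ∑ C ∈ F, w C := by
  have hrestrict : ∀ G ∈ F.powerset, ∑ C ∈ G, w C = ∑ C ∈ F with C ∈ G, w C :=
    fun G hG => by rw [filter_mem_eq_inter, inter_eq_right.mpr (mem_powerset.mp hG)]
  rw [sum_congr rfl fun G hG => congrArg _ (hrestrict G hG), sum_mul_sum_filter_comm, mul_sum]
  refine sum_congr rfl fun C hC => ?_
  have hevent : {G ∈ F.powerset | C ∈ G} = Icc {C} F := by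
    ext G
    simp [and_comm]
  rw [hevent, sum_sampleProb_Icc p (singleton_subset_iff.mpr hC) subset_rfl]
  simp [mul_comm]

theorem sum_sampleProb_mul_card_filter {κ : Type*} (F : Finset ι) (p : ℝ) (I : Finset κ)
    (A B : κ → Finset ι) (hA : ∀ i ∈ I, A i ⊆ F) (hB : ∀ i ∈ I, B i ⊆ F)
    (hAB : ∀ i ∈ I, Disjoint (A i) (B i)) :
    ∑ G ∈ F.powerset, sampleProb F p G * #{i ∈ I | A i ⊆ G ∧ Disjoint (B i) G} =
      ∑ i ∈ I, p ^ #(A i) * (1 - p) ^ #(B i) := by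
  simp only [cast_card]
  rw [sum_mul_sum_filter_comm]
  refine sum_congr rfl fun i hi => ?_
  have hevent : {G ∈ F.powerset | A i ⊆ G ∧ Disjoint (B i) G} = Icc (A i) (F \ B i) := by
    ext G
    simp only [mem_filter, mem_powerset, mem_Icc, subset_sdiff, disjoint_comm]
    tauto
  rw [hevent, sum_sampleProb_Icc p (subset_sdiff.mpr ⟨hA i hi, hAB i hi⟩) sdiff_subset,
    Finset.sdiff_sdiff_eq_self (hB i hi), one_mul]

end

theorem one_le_exp_one_mul_one_sub_inv_pow (k : ℕ) :
    1 ≤ Real.exp 1 * (1 - ((k : ℝ) + 1)⁻¹) ^ k := by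
  have hprod : ((1 + (k : ℝ)⁻¹) * (1 - ((k : ℝ) + 1)⁻¹)) ^ k = 1 := by
    rcases k.eq_zero_or_pos with rfl | hk
    · simp
    · have : (0 : ℝ) < k := by exact_mod_cast hk
      rw [show (1 + (k : ℝ)⁻¹) * (1 - ((k : ℝ) + 1)⁻¹) = 1 by field_simp; ring, one_pow]
  calc (1 : ℝ) = (1 + (k : ℝ)⁻¹) ^ k * (1 - ((k : ℝ) + 1)⁻¹) ^ k := by
        rw [← mul_pow, hprod]
    _ ≤ Real.exp 1 * (1 - ((k : ℝ) + 1)⁻¹) ^ k := by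
      have : 0 ≤ 1 - ((k : ℝ) + 1)⁻¹ := sub_nonneg.mpr (inv_le_one_of_one_le₀ (by simp))
      gcongr
      exact Real.one_add_inv_pow_le_exp

theorem card_filter_card_le_mul_le_sum {ι κ : Type*} (I : Finset κ) (A B : κ → Finset ι)
    {a : ℕ} (hA : ∀ i ∈ I, #(A i) = a) (k : ℕ) {x y : ℝ} (hx0 : 0 ≤ x)
    (hy0 : 0 ≤ y) (hy1 : y ≤ 1) :
    #{i ∈ I | #(B i) ≤ k} * (x ^ a * y ^ k) ≤ ∑ i ∈ I, x ^ #(A i) * y ^ #(B i) :=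
  calc #{i ∈ I | #(B i) ≤ k} * (x ^ a * y ^ k)
      = ∑ i ∈ I with #(B i) ≤ k, x ^ a * y ^ k := by rw [sum_const, nsmul_eq_mul]
    _ ≤ ∑ i ∈ I with #(B i) ≤ k, x ^ #(A i) * y ^ #(B i) := by
      refine sum_le_sum fun i hi => ?_
      obtain ⟨hiI, hBk⟩ := mem_filter.mp hi
      rw [hA i hiI]
      exact mul_le_mul_of_nonneg_left (pow_le_pow_of_le_one hy0 hy1 hBk) (by positivity)
    _ ≤ ∑ i ∈ I, x ^ #(A i) * y ^ #(B i) :=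
      sum_le_sum_of_subset_of_nonneg (filter_subset _ _) fun i _ _ => by positivity

theorem le_exp_one_mul_pow_mul_of_mul_le {N c : ℝ} (hN : 0 ≤ N) (a k : ℕ)
    (h : N * (((k : ℝ) + 1)⁻¹ ^ a * (1 - ((k : ℝ) + 1)⁻¹) ^ k) ≤
      c * ((k : ℝ) + 1)⁻¹) :
    N ≤ Real.exp 1 * ((k : ℝ) + 1) ^ (a - 1) * c := by
  set p : ℝ := ((k : ℝ) + 1)⁻¹
  have hp0 : 0 < p := by positivity
  have hp1 : p ≤ 1 := inv_le_one_of_one_le₀ (by simp)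
  have h1p : 0 ≤ 1 - p := sub_nonneg.mpr hp1
  have hpow : p ^ (a - 1) * p ≤ p ^ a := by
    rw [← pow_succ]
    exact pow_le_pow_of_le_one hp0.le hp1 (by omega)
  have hc : N * (p ^ (a - 1) * (1 - p) ^ k) ≤ c := by
    refine le_of_mul_le_mul_right ((le_trans ?_ h)) hp0
    calc N * (p ^ (a - 1) * (1 - p) ^ k) * p = N * ((p ^ (a - 1) * p) * (1 - p) ^ k) := by ring
      _ ≤ N * (p ^ a * (1 - p) ^ k) := by gcongr
  calc N = N * (((k : ℝ) + 1) * p) ^ (a - 1) := by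
        rw [mul_inv_cancel₀ (by positivity), one_pow, mul_one]
    _ ≤ N * (((k : ℝ) + 1) * p) ^ (a - 1) * (Real.exp 1 * (1 - p) ^ k) :=
      le_mul_of_one_le_right (by positivity) (one_le_exp_one_mul_one_sub_inv_pow k)
    _ = Real.exp 1 * ((k : ℝ) + 1) ^ (a - 1) * (N * (p ^ (a - 1) * (1 - p) ^ k)) := by
      rw [mul_pow]; ring
    _ ≤ Real.exp 1 * ((k : ℝ) + 1) ^ (a - 1) * c := by gcongr

open Classical in
theorem clarkson_shor_bound_general
    {ι κ : Type*} (F : Finset ι) (w : ι → ℕ) (n : ℕ)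
    (hn : ∑ C ∈ F, w C = n) (a : ℕ)
    (I : Finset κ) (A B : κ → Finset ι)
    (hA : ∀ i ∈ I, (A i).card = a)
    (hAsub : ∀ i ∈ I, A i ⊆ F) (hBsub : ∀ i ∈ I, B i ⊆ F)
    (hdisj : ∀ i ∈ I, Disjoint (A i) (B i))
    (α : ℝ)
    (hCS : ∀ G ⊆ F,
      ((I.filter fun i => A i ⊆ G ∧ (B i : Set ι) ∩ (G : Set ι) = ∅).card : ℝ)
        ≤ α * ∑ C ∈ G, (w C : ℝ))
    (k : ℕ) :
    ((I.filter fun i => (B i).card ≤ k).card : ℝ)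
      ≤ Real.exp 1 * ((k : ℝ) + 1) ^ (a - 1) * α * (n : ℝ) := by
  classical
  set p : ℝ := ((k : ℝ) + 1)⁻¹
  have hp0 : 0 ≤ p := by positivity
  have hp1 : p ≤ 1 := inv_le_one_of_one_le₀ (by simp)
  have hCS_disjoint : ∀ G ⊆ F,
      #{i ∈ I | A i ⊆ G ∧ Disjoint (B i) G} ≤ α * ∑ C ∈ G, (w C : ℝ) := by
    intro G hG
    convert hCS G hG using 5
    simp only [← Set.disjoint_iff_inter_eq_empty, disjoint_coe]
  rw [mul_assoc _ α]
  refine le_exp_one_mul_pow_mul_of_mul_le (Nat.cast_nonneg _) a k ?_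
  calc #{i ∈ I | #(B i) ≤ k} * (p ^ a * (1 - p) ^ k)
      ≤ ∑ i ∈ I, p ^ #(A i) * (1 - p) ^ #(B i) :=
        card_filter_card_le_mul_le_sum I A B hA k hp0 (sub_nonneg.mpr hp1) (by linarith)
    _ = ∑ G ∈ F.powerset, sampleProb F p G * #{i ∈ I | A i ⊆ G ∧ Disjoint (B i) G} :=
        (sum_sampleProb_mul_card_filter F p I A B hAsub hBsub hdisj).symm
    _ ≤ ∑ G ∈ F.powerset, sampleProb F p G * (α * ∑ C ∈ G, (w C : ℝ)) :=
        sum_le_sum fun G hG => mul_le_mul_of_nonneg_left (hCS_disjoint G (mem_powerset.mp hG))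
          (sampleProb_nonneg F hp0 hp1 G)
    _ = α * n * p := by
        simp only [mul_left_comm _ α, ← mul_sum, sum_sampleProb_mul_sum, ← hn, Nat.cast_sum]
        ring

open Classical in
/-- Clarkson–Shor bound: if every subfamily `G ⊆ F` has at most
`α · (total size of G)` zero-weight configurations, then for every `k ≥ 1` the number
of configurations of weight at most `k` is at most `e · (k+1)^(a-1) · α · n`. -/
theorem clarkson_shor_bound
    {ι κ : Type*} (F : Finset ι) (w : ι → ℕ) (n : ℕ)
    (hn : ∑ C ∈ F, w C = n) (a : ℕ) (ha : 1 ≤ a)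
    (I : Finset κ) (A B : κ → Finset ι)
    (hA : ∀ i ∈ I, (A i).card = a)
    (hAsub : ∀ i ∈ I, A i ⊆ F) (hBsub : ∀ i ∈ I, B i ⊆ F)
    (hdisj : ∀ i ∈ I, Disjoint (A i) (B i))
    (hinj : ∀ i ∈ I, ∀ j ∈ I, A i = A j → B i = B j → i = j)
    (α : ℝ) (hα : 0 ≤ α)
    (hCS : ∀ G ⊆ F,
      ((I.filter fun i => A i ⊆ G ∧ (B i : Set ι) ∩ (G : Set ι) = ∅).card : ℝ)
        ≤ α * ∑ C ∈ G, (w C : ℝ))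
    (k : ℕ) (hk : 1 ≤ k) :
    ((I.filter fun i => (B i).card ≤ k).card : ℝ)
      ≤ Real.exp 1 * ((k : ℝ) + 1) ^ (a - 1) * α * (n : ℝ) :=
  clarkson_shor_bound_general F w n hn a I A B hA hAsub hBsub hdisj α hCS k
end
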